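/- For the WENO-6 subdivision scheme, at odd indices one has |D(S_weno(f))_{2n+1}| ≤ (1/2)·sup_k |Df_k|, where D(S_weno(f))_{2n+1} = f_n - 2·S_weno(f)_{2n+1} + f_{n+1}. -/

import Mathlib

/-!
The fine-grid second difference `f n - 2 Sodd n + f (n + 1)` equals `-1/8` times the WENO
correction stencil `α₀ Df_{n+2} - (3α₀ + α₁) Df_{n+1} - (α₁ + 3α₂) Df_n + α₂ Df_{n-1}`. For convex
weights the absolute coefficients of that stencil sum to `4α₀ + 2α₁ + 4α₂ ≤ 4`, so it is at most
`4 sup |Df|`, which gives the factor `1/2`.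
-/

/-- Second difference operator. -/
def D (f : ℤ → ℝ) (n : ℤ) : ℝ := f (n + 1) - 2 * f n + f (n - 1)

theorem abs_D_le_of_abs_le {f : ℤ → ℝ} {C : ℝ} (hC : ∀ n, |f n| ≤ C) (n : ℤ) :
    |D f n| ≤ 4 * C := by
  have hsucc := abs_le.mp (hC (n + 1))
  have hself := abs_le.mp (hC n)
  have hpred := abs_le.mp (hC (n - 1))
  rw [D, abs_le]
  constructor <;> linarith

theorem bddAbove_range_abs_D {f : ℤ → ℝ} (hf : ∃ C, ∀ n, |f n| ≤ C) :
    BddAbove (Set.range fun k => |D f k|) :=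
  let ⟨C, hC⟩ := hf
  ⟨4 * C, Set.forall_mem_range.2 (abs_D_le_of_abs_le hC)⟩

theorem abs_add_four_mul_le {c₀ c₁ c₂ c₃ x₀ x₁ x₂ x₃ M : ℝ}
    (h₀ : |x₀| ≤ M) (h₁ : |x₁| ≤ M) (h₂ : |x₂| ≤ M) (h₃ : |x₃| ≤ M) :
    |c₀ * x₀ + c₁ * x₁ + c₂ * x₂ + c₃ * x₃| ≤ (|c₀| + |c₁| + |c₂| + |c₃|) * M := by
  have hterm {c x : ℝ} (hx : |x| ≤ M) : |c * x| ≤ |c| * M := by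
    rw [abs_mul]; exact mul_le_mul_of_nonneg_left hx (abs_nonneg c)
  calc |c₀ * x₀ + c₁ * x₁ + c₂ * x₂ + c₃ * x₃|
      ≤ |c₀ * x₀| + |c₁ * x₁| + |c₂ * x₂| + |c₃ * x₃| :=
        (abs_add_le _ _).trans <| add_le_add_left
          ((abs_add_le _ _).trans <| add_le_add_left (abs_add_le _ _) _) _
    _ ≤ |c₀| * M + |c₁| * M + |c₂| * M + |c₃| * M := by
        gcongr <;> exact hterm ‹_›
    _ = (|c₀| + |c₁| + |c₂| + |c₃|) * M := by ring

theorem abs_weno6_correction_le {α₀ α₁ α₂ x₀ x₁ x₂ x₃ M : ℝ}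
    (hα₀ : 0 ≤ α₀) (hα₁ : 0 ≤ α₁) (hα₂ : 0 ≤ α₂) (hα : α₀ + α₁ + α₂ = 1)
    (h₀ : |x₀| ≤ M) (h₁ : |x₁| ≤ M) (h₂ : |x₂| ≤ M) (h₃ : |x₃| ≤ M) :
    |α₀ * x₀ - (3 * α₀ + α₁) * x₁ - (α₁ + 3 * α₂) * x₂ + α₂ * x₃| ≤ 4 * M := by
  have hM : 0 ≤ M := (abs_nonneg x₀).trans h₀
  have hmass : |α₀| + |-(3 * α₀ + α₁)| + |-(α₁ + 3 * α₂)| + |α₂| ≤ 4 := by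
    rw [abs_neg, abs_neg, abs_of_nonneg hα₀, abs_of_nonneg (by positivity),
      abs_of_nonneg (by positivity), abs_of_nonneg hα₂]
    linarith
  calc |α₀ * x₀ - (3 * α₀ + α₁) * x₁ - (α₁ + 3 * α₂) * x₂ + α₂ * x₃|
      = |α₀ * x₀ + -(3 * α₀ + α₁) * x₁ + -(α₁ + 3 * α₂) * x₂ + α₂ * x₃| := by congr 1; ring
    _ ≤ (|α₀| + |-(3 * α₀ + α₁)| + |-(α₁ + 3 * α₂)| + |α₂|) * M :=
        abs_add_four_mul_le h₀ h₁ h₂ h₃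
    _ ≤ 4 * M := mul_le_mul_of_nonneg_right hmass hM

/-- For the WENO-6 scheme, at odd indices
`|D(S_weno f)_{2n+1}| = |f_n - 2·S_weno(f)_{2n+1} + f_{n+1}| ≤ (1/2) ⨆ k |Df_k|`,
where `Sodd n = S_weno(f)_{2n+1}` and the convex weights may depend on `n`. -/
theorem weno6_D_odd (f : ℤ → ℝ) (hf : ∃ C, ∀ n, |f n| ≤ C)
    (a0 a1 a2 : ℤ → ℝ)
    (ha0 : ∀ n, 0 ≤ a0 n) (ha1 : ∀ n, 0 ≤ a1 n) (ha2 : ∀ n, 0 ≤ a2 n)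
    (hsum : ∀ n, a0 n + a1 n + a2 n = 1)
    (Sodd : ℤ → ℝ)
    (hS : ∀ n, Sodd n = (f n + f (n + 1)) / 2
        + (a0 n / 16) * D f (n + 2) - ((3 * a0 n + a1 n) / 16) * D f (n + 1)
        - ((a1 n + 3 * a2 n) / 16) * D f n + (a2 n / 16) * D f (n - 1))
    (n : ℤ) :
    |f n - 2 * Sodd n + f (n + 1)| ≤ (1 / 2) * ⨆ k, |D f k| := by
  set M := ⨆ k, |D f k|
  have hM (k : ℤ) : |D f k| ≤ M := le_ciSup (bddAbove_range_abs_D hf) k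
  have hcorr := abs_weno6_correction_le (ha0 n) (ha1 n) (ha2 n) (hsum n)
    (hM (n + 2)) (hM (n + 1)) (hM n) (hM (n - 1))
  have hsecond : f n - 2 * Sodd n + f (n + 1) = -(a0 n * D f (n + 2)
      - (3 * a0 n + a1 n) * D f (n + 1) - (a1 n + 3 * a2 n) * D f n + a2 n * D f (n - 1)) / 8 := by
    rw [hS]; ring
  rw [hsecond, abs_div, abs_neg, abs_of_pos (by norm_num : (0 : ℝ) < 8)]
  linarith
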